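/- arXiv:2303.08167 — 5 statements merged into one kernel-verified Lean document; each statement's English description precedes it below -/
import Mathlib

section
/- There is a universal constant c > 0 such that for every integer k ≥ 1, hervecdisc(A_k) ≥ c · √k · detlb(A_k), where A_k is the 2^k × 2^k discrete Haar basis matrix. (Since A_k has n = 2^k columns, √k is of order √(log n).) -/
open scoped Kronecker
/-- The determinant lower bound: the max over `k ≥ 1` and `k × k` submatrices `B`
of `|det B| ^ (1/k)`. -/
noncomputable def detlb {m n : Type*} [Fintype m] [Fintype n] (A : Matrix m n ℝ) : ℝ :=
  sSup { t | ∃ k : ℕ, 0 < k ∧ ∃ r : Fin k → m, ∃ c : Fin k → n,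
    Function.Injective r ∧ Function.Injective c ∧
    t = |(A.submatrix r c).det| ^ ((k : ℝ)⁻¹) }

/-- The vector discrepancy: the minimum over assignments of unit vectors to the columns
of the maximal Euclidean norm of a signed row-sum. -/
noncomputable def vecdisc {m n : Type*} [Fintype m] [Fintype n] (A : Matrix m n ℝ) : ℝ :=
  sInf { t | ∃ v : n → EuclideanSpace ℝ n, (∀ j, ‖v j‖ = 1) ∧
    t = sSup { s | ∃ i : m, s = ‖∑ j, A i j • v j‖ } }

/-- The hereditary vector discrepancy: the max of `vecdisc` over all column restrictions. -/
noncomputable def hervecdisc {m n : Type*} [Fintype m] [Fintype n] (A : Matrix m n ℝ) : ℝ :=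
  sSup { t | ∃ S : Finset n,
    t = vecdisc (A.submatrix id (fun j : {j // j ∈ S} => (j : n))) }

/-- The `2^k × 2^k` discrete Haar basis matrix, defined recursively by `A_0 = [1]` and
`A_k = [[A_{k-1}, I], [A_{k-1}, -I]]`. -/
noncomputable def haar : (k : ℕ) → Matrix (Fin (2 ^ k)) (Fin (2 ^ k)) ℝ
  | 0 => Matrix.of fun _ _ => 1
  | k + 1 =>
      Matrix.reindex
        ((finSumFinEquiv (m := 2 ^ k) (n := 2 ^ k)).trans (finCongr (by rw [pow_succ, mul_two])))
        ((finSumFinEquiv (m := 2 ^ k) (n := 2 ^ k)).trans (finCongr (by rw [pow_succ, mul_two])))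
        (Matrix.fromBlocks (haar k) (1 : Matrix (Fin (2 ^ k)) (Fin (2 ^ k)) ℝ)
          (haar k) (-1 : Matrix (Fin (2 ^ k)) (Fin (2 ^ k)) ℝ))

/-!
Every `s × s` minor of `A_k` is at most `2 ^ s` in absolute value, so `detlb A_k ≤ 2`: in
`[[A, I], [A, -I]]` a minor either contains a column of the identity blocks, which has at most two
nonzero entries `±1` and along which we expand, or it only uses columns of the two copies of `A`
and is a minor of `A` with possibly repeated rows.

The columns of `A_k` are orthogonal, so for any unit vectors `v_j` the squares
`‖∑_j A_ij v_j‖²` sum over the rows to `∑_ij A_ij² = (k + 1) 2 ^ k`. Some row among the `2 ^ k`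
therefore has norm at least `√(k + 1)`, and already `vecdisc A_k ≥ √(k + 1)`.
-/

open Matrix Function

section Minors

variable {m n : Type*}

def MinorsBoundedBy (A : Matrix m n ℝ) (b : ℝ) : Prop :=
  ∀ (s : ℕ) (r : Fin s → m) (c : Fin s → n), |(A.submatrix r c).det| ≤ b ^ s

theorem MinorsBoundedBy.of_injective {A : Matrix m n ℝ} {b : ℝ} (hb : 0 ≤ b)
    (h : ∀ (s : ℕ) (r : Fin s → m) (c : Fin s → n), Injective r → Injective c →
      |(A.submatrix r c).det| ≤ b ^ s) :
    MinorsBoundedBy A b := by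
  intro s r c
  by_cases hr : Injective r
  · by_cases hc : Injective c
    · exact h s r c hr hc
    · obtain ⟨j₁, j₂, hcj, hne⟩ := not_injective_iff.mp hc
      rw [det_zero_of_column_eq hne fun i => by simp [hcj], abs_zero]
      positivity
  · obtain ⟨i₁, i₂, hri, hne⟩ := not_injective_iff.mp hr
    rw [det_zero_of_row_eq hne (by ext; simp [hri]), abs_zero]
    positivity

theorem MinorsBoundedBy.reindex {m' n' : Type*} {A : Matrix m n ℝ} {b : ℝ}
    (h : MinorsBoundedBy A b) (e : m ≃ m') (f : n ≃ n') :
    MinorsBoundedBy (Matrix.reindex e f A) b := fun s r c =>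
  h s (e.symm ∘ r) (f.symm ∘ c)

theorem abs_det_le_sum_abs_mul {t : ℕ} (M : Matrix (Fin (t + 1)) (Fin (t + 1)) ℝ)
    (j : Fin (t + 1)) {C : ℝ}
    (hminor : ∀ i : Fin (t + 1), |(M.submatrix i.succAbove j.succAbove).det| ≤ C) :
    |M.det| ≤ (∑ i, |M i j|) * C := by
  rw [det_succ_column M j, Finset.sum_mul]
  refine (Finset.abs_sum_le_sum_abs _ _).trans (Finset.sum_le_sum fun i _ => ?_)
  rw [abs_mul, abs_mul, abs_pow, abs_neg, abs_one, one_pow, one_mul]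
  exact mul_le_mul_of_nonneg_left (hminor i) (abs_nonneg _)

variable {ι : Type*} [DecidableEq ι]

theorem sum_abs_fromBlocks_one_neg_one_inr_le [Fintype ι] (A : Matrix ι ι ℝ) {s : ℕ}
    {r : Fin s → ι ⊕ ι} (hr : Injective r) (b : ι) :
    ∑ i, |fromBlocks A 1 A (-1) (r i) (Sum.inr b)| ≤ 2 := calc
  ∑ i, |fromBlocks A 1 A (-1) (r i) (Sum.inr b)|
      = ∑ x ∈ Finset.univ.map ⟨r, hr⟩, |fromBlocks A 1 A (-1) x (Sum.inr b)| := by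
        rw [Finset.sum_map]; rfl
  _ ≤ ∑ x, |fromBlocks A 1 A (-1) x (Sum.inr b)| :=
        Finset.sum_le_univ_sum_of_nonneg fun _ => abs_nonneg _
  _ = 2 := by norm_num [Fintype.sum_sum_type, one_apply, apply_ite abs]

theorem MinorsBoundedBy.fromBlocks_one_neg_one [Fintype ι] {A : Matrix ι ι ℝ}
    (hA : MinorsBoundedBy A 2) :
    MinorsBoundedBy (fromBlocks A 1 A (-1 : Matrix ι ι ℝ)) 2 := by
  refine .of_injective zero_le_two fun s => ?_
  induction s with
  | zero => simp
  | succ t ih =>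
    intro r c hr hc
    by_cases hright : ∃ j b, c j = Sum.inr b
    · obtain ⟨j, b, hcj⟩ := hright
      calc _ ≤ (∑ i, |(fromBlocks A 1 A (-1)).submatrix r c i j|) * 2 ^ t :=
            abs_det_le_sum_abs_mul _ j fun i =>
              ih _ _ (hr.comp Fin.succAbove_right_injective)
                (hc.comp Fin.succAbove_right_injective)
        _ ≤ 2 * 2 ^ t := by
            gcongr
            simpa [hcj] using sum_abs_fromBlocks_one_neg_one_inr_le A hr b
        _ = 2 ^ (t + 1) := by ring
    · push Not at hright
      have hleft : ∀ j, ∃ a, c j = Sum.inl a := fun j => by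
        rcases h : c j with a | b
        exacts [⟨a, rfl⟩, absurd h (hright j b)]
      choose c₀ hc₀ using hleft
      have hsub : (fromBlocks A 1 A (-1)).submatrix r c
          = A.submatrix (fun i => Sum.elim id id (r i)) c₀ := by
        ext i j
        rcases hri : r i with a | a <;> simp [hc₀, hri]
      rw [hsub]
      exact hA _ _ _

end Minors

theorem detlb_le_of_minorsBoundedBy {m n : Type*} [Fintype m] [Fintype n] {A : Matrix m n ℝ}
    {b : ℝ} (hb : 0 ≤ b) (h : MinorsBoundedBy A b) : detlb A ≤ b := by
  refine Real.sSup_le ?_ hb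
  rintro x ⟨s, hs, r, c, -, -, rfl⟩
  calc |(A.submatrix r c).det| ^ (s : ℝ)⁻¹ ≤ (b ^ s) ^ (s : ℝ)⁻¹ := by
        gcongr
        exact h s r c
    _ = b := Real.pow_rpow_inv_natCast hb hs.ne'

section VectorDiscrepancy

variable {m n : Type*} [Fintype m] [Fintype n]

theorem le_vecdisc [Nonempty n] {A : Matrix m n ℝ} {t : ℝ}
    (h : ∀ v : n → EuclideanSpace ℝ n, (∀ j, ‖v j‖ = 1) → ∃ i, t ≤ ‖∑ j, A i j • v j‖) :
    t ≤ vecdisc A := by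
  classical
  refine le_csInf ?_ ?_
  · obtain ⟨j₀⟩ := ‹Nonempty n›
    exact ⟨_, fun _ => EuclideanSpace.single j₀ 1, fun _ => by simp, rfl⟩
  · rintro _ ⟨v, hv, rfl⟩
    obtain ⟨i, hi⟩ := h v hv
    refine hi.trans (le_csSup ?_ ⟨i, rfl⟩)
    exact ((Set.finite_range fun i => ‖∑ j, A i j • v j‖).subset
      (by rintro _ ⟨i, rfl⟩; exact ⟨i, rfl⟩)).bddAbove

theorem vecdisc_submatrix_le_hervecdisc (A : Matrix m n ℝ) (S : Finset n) :
    vecdisc (A.submatrix id (fun j : S => (j : n))) ≤ hervecdisc A := by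
  refine le_csSup ?_ ⟨S, rfl⟩
  exact ((Set.finite_range fun S : Finset n =>
    vecdisc (A.submatrix id (fun j : S => (j : n)))).subset
      (by rintro _ ⟨S, rfl⟩; exact ⟨S, rfl⟩)).bddAbove

theorem Matrix.HasOrthogonalCols.sum_norm_sq_sum_smul {E : Type*} [NormedAddCommGroup E]
    [InnerProductSpace ℝ E] {A : Matrix m n ℝ} (hA : A.HasOrthogonalCols) {v : n → E}
    (hv : ∀ j, ‖v j‖ = 1) :
    ∑ i, ‖∑ j, A i j • v j‖ ^ 2 = ∑ i, ∑ j, A i j ^ 2 := calc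
  ∑ i, ‖∑ j, A i j • v j‖ ^ 2
      = ∑ j, ∑ j', (∑ i, A i j * A i j') * inner ℝ (v j) (v j') := by
        simp only [← real_inner_self_eq_norm_sq, sum_inner, inner_sum, real_inner_smul_left,
          real_inner_smul_right, Finset.sum_mul]
        rw [Finset.sum_comm]
        refine Finset.sum_congr rfl fun j _ => ?_
        rw [Finset.sum_comm]
        refine Finset.sum_congr rfl fun j' _ => Finset.sum_congr rfl fun i _ => ?_
        rw [real_inner_comm, mul_assoc]
  _ = ∑ j, ∑ i, A i j ^ 2 := by
        refine Finset.sum_congr rfl fun j _ => ?_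
        rw [Finset.sum_eq_single j (fun j' _ hj' => by
          rw [show ∑ i, A i j * A i j' = 0 from hA (Ne.symm hj'), zero_mul]) (by simp)]
        simp [hv, sq]
  _ = ∑ i, ∑ j, A i j ^ 2 := Finset.sum_comm

theorem Matrix.HasOrthogonalCols.sqrt_sum_sq_div_card_le_vecdisc [Nonempty m] [Nonempty n]
    {A : Matrix m n ℝ} (hA : A.HasOrthogonalCols) :
    √((∑ i, ∑ j, A i j ^ 2) / Fintype.card m) ≤ vecdisc A := by
  refine le_vecdisc fun v hv => ?_
  have hsum : ∑ _i : m, (∑ i, ∑ j, A i j ^ 2) / Fintype.card m ≤ ∑ i, ‖∑ j, A i j • v j‖ ^ 2 := by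
    rw [hA.sum_norm_sq_sum_smul hv, Finset.sum_const, Finset.card_univ, nsmul_eq_mul,
      mul_div_cancel₀ _ (Nat.cast_ne_zero.mpr Fintype.card_ne_zero)]
  obtain ⟨i, -, hi⟩ := Finset.exists_le_of_sum_le Finset.univ_nonempty hsum
  exact ⟨i, Real.sqrt_le_iff.mpr ⟨norm_nonneg _, hi⟩⟩

end VectorDiscrepancy

def haarIndexEquiv (k : ℕ) : Fin (2 ^ k) ⊕ Fin (2 ^ k) ≃ Fin (2 ^ (k + 1)) :=
  finSumFinEquiv.trans (finCongr (by rw [pow_succ, mul_two]))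

theorem haar_succ (k : ℕ) :
    haar (k + 1) = reindex (haarIndexEquiv k) (haarIndexEquiv k)
      (fromBlocks (haar k) 1 (haar k) (-1)) :=
  rfl

theorem minorsBoundedBy_haar (k : ℕ) : MinorsBoundedBy (haar k) 2 := by
  induction k with
  | zero =>
    refine .of_injective zero_le_two fun s r c hr _ => ?_
    have hs : s ≤ 1 := by simpa using Fintype.card_le_of_injective r hr
    interval_cases s
    · simp
    · simp [haar]
  | succ k ih =>
    rw [haar_succ]
    exact ih.fromBlocks_one_neg_one.reindex _ _

theorem hasOrthogonalCols_haar (k : ℕ) : (haar k).HasOrthogonalCols := by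
  rw [← transpose_mul_self_isDiag_iff_hasOrthogonalCols]
  induction k with
  | zero => exact fun i j h => (h (Subsingleton.elim (α := Fin 1) i j)).elim
  | succ k ih =>
    rw [haar_succ, reindex_apply, transpose_submatrix, submatrix_mul_equiv, fromBlocks_transpose,
      fromBlocks_multiply]
    simp only [transpose_one, transpose_neg, mul_one, mul_neg, one_mul, neg_mul, neg_neg,
      add_neg_cancel]
    exact ((ih.add ih).fromBlocks (isDiag_one.add isDiag_one)).submatrix (Equiv.injective _)

theorem sum_sq_haar (k : ℕ) : ∑ i, ∑ j, haar k i j ^ 2 = (k + 1) * 2 ^ k := by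
  induction k with
  | zero => simp [haar]
  | succ k ih =>
    have hblocks : ∑ i, ∑ j, haar (k + 1) i j ^ 2
        = ∑ x, ∑ y, fromBlocks (haar k) 1 (haar k) (-1 : Matrix _ _ ℝ) x y ^ 2 :=
      Fintype.sum_equiv (haarIndexEquiv k).symm _ _ fun i =>
        Fintype.sum_equiv (haarIndexEquiv k).symm _ _ fun j => rfl
    simp [hblocks, Fintype.sum_sum_type, Finset.sum_add_distrib, ih, one_apply]
    ring

theorem detlb_haar_le (k : ℕ) : detlb (haar k) ≤ 2 :=
  detlb_le_of_minorsBoundedBy zero_le_two (minorsBoundedBy_haar k)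

theorem sqrt_succ_le_hervecdisc_haar (k : ℕ) : √(k + 1) ≤ hervecdisc (haar k) := by
  let S : Finset (Fin (2 ^ k)) := Finset.univ
  have : Nonempty S := ⟨⟨0, Finset.mem_univ _⟩⟩
  have hcols : ((haar k).submatrix id (fun j : S => (j : Fin (2 ^ k)))).HasOrthogonalCols :=
    fun j j' hne => hasOrthogonalCols_haar k (Subtype.val_injective.ne hne)
  calc √(k + 1) = √((∑ i, ∑ j : S, haar k i j ^ 2) / Fintype.card (Fin (2 ^ k))) := by
        rw [Finset.sum_congr rfl fun i _ => Finset.sum_coe_sort S (fun j => haar k i j ^ 2),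
          sum_sq_haar, Fintype.card_fin, Nat.cast_pow, Nat.cast_ofNat,
          mul_div_cancel_right₀ _ (by positivity)]
    _ ≤ _ := hcols.sqrt_sum_sq_div_card_le_vecdisc
    _ ≤ hervecdisc (haar k) := vecdisc_submatrix_le_hervecdisc _ _

/-- There is a universal constant `c > 0` such that for every `k ≥ 1`,
`hervecdisc (A_k) ≥ c · √k · detlb (A_k)` for the discrete Haar basis matrix `A_k`. -/
theorem stmt2 : ∃ c : ℝ, 0 < c ∧ ∀ k : ℕ, 1 ≤ k →
    c * Real.sqrt k * detlb (haar k) ≤ hervecdisc (haar k) := by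
  refine ⟨1 / 2, by norm_num, fun k _ => ?_⟩
  calc 1 / 2 * √k * detlb (haar k) ≤ 1 / 2 * √k * 2 := by gcongr; exact detlb_haar_le k
    _ = √k := by ring
    _ ≤ √(k + 1) := Real.sqrt_le_sqrt (by linarith)
    _ ≤ hervecdisc (haar k) := sqrt_succ_le_hervecdisc_haar k
end

section
/- For every positive integer N and every real matrix A, detlb(P_N ⊗ A) ≤ √(eN) · detlb(A), where ⊗ denotes the Kronecker product. -/
open scoped Kronecker

/-- The `2^N × N` power matrix whose rows are the indicator vectors of all `2^N` subsets
of `[N]` (row `i` is the indicator of the binary representation of `i`). -/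
noncomputable def powerMatrix (N : ℕ) : Matrix (Fin (2 ^ N)) (Fin N) ℝ :=
  Matrix.of fun i j => if Nat.testBit (i : ℕ) (j : ℕ) then 1 else 0

open Matrix Finset

/-! Let `B` be a `k × k` submatrix of `P ⊗ A` with entries of `P` in `[-1, 1]`, and group the
columns of `B` by the column `j` of `P` they come from, in groups `B_j` of sizes `m_j`. Fischer's
inequality for the Gram matrix gives `det B ^ 2 ≤ ∏ j, det (B_jᵀ B_j)`, and by Cauchy–Binet each
factor is a sum of `choose k m_j` squared maximal minors of `B_j`. Such a minor is a minor of `A`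
with rows rescaled by entries of `P`, so it is at most `detlb A ^ m_j` in absolute value. Finally
`∏ j, choose k m_j ≤ k ^ k / ∏ j, m_j! ≤ e ^ k * k! / ∏ j, m_j! ≤ (e N) ^ k`, the last step because
a multinomial coefficient is at most `N ^ k`. -/

theorem Nat.multinomial_le_card_pow {α : Type*} [DecidableEq α] (s : Finset α) (f : α → ℕ) :
    Nat.multinomial s f ≤ #s ^ (∑ i ∈ s, f i) := by
  set g : α → ℕ := fun i => if i ∈ s then f i else 0
  have hfg : ∀ i ∈ s, f i = g i := fun i hi => by simp [g, hi]
  have hg : g ∈ piAntidiag s (∑ i ∈ s, f i) := by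
    rw [mem_piAntidiag, sum_congr rfl hfg]
    exact ⟨rfl, fun i hi => by by_contra h; simp [g, h] at hi⟩
  have hpow : #s ^ (∑ i ∈ s, f i) = ∑ k ∈ piAntidiag s (∑ i ∈ s, f i), Nat.multinomial s k := by
    simpa using sum_pow_eq_sum_piAntidiag s (fun _ => (1 : ℕ)) (∑ i ∈ s, f i)
  rw [hpow, Nat.multinomial_congr hfg]
  exact single_le_sum (fun _ _ => Nat.zero_le _) hg

theorem prod_choose_le_exp_mul_pow {β : Type*} [Fintype β] [DecidableEq β] (m : β → ℕ) {k : ℕ}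
    (hk : ∑ j, m j = k) :
    ∏ j, (k.choose (m j) : ℝ) ≤ (Real.exp 1 * Fintype.card β) ^ k := by
  set F : ℕ := ∏ j, (m j).factorial
  have hchoose : (∏ j, k.choose (m j)) * F ≤ k ^ k := by
    calc (∏ j, k.choose (m j)) * F = ∏ j, k.descFactorial (m j) := by
          rw [← prod_mul_distrib]
          exact prod_congr rfl fun j _ => by
            rw [Nat.descFactorial_eq_factorial_mul_choose, mul_comm]
      _ ≤ ∏ j, k ^ m j := prod_le_prod' fun j _ => Nat.descFactorial_le_pow k (m j)
      _ = k ^ k := by rw [prod_pow_eq_pow_sum, hk]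
  have hfact : k.factorial ≤ Fintype.card β ^ k * F := by
    have hmult := Nat.multinomial_le_card_pow univ m
    rw [card_univ, hk] at hmult
    calc k.factorial = F * Nat.multinomial univ m := by rw [Nat.multinomial_spec, hk]
      _ ≤ F * Fintype.card β ^ k := by gcongr
      _ = _ := mul_comm _ _
  have hexp : (k : ℝ) ^ k ≤ Real.exp 1 ^ k * k.factorial := by
    rw [Real.exp_one_pow, ← div_le_iff₀ (by positivity)]
    exact Real.pow_div_factorial_le_exp _ (Nat.cast_nonneg k) k
  have hF : (0 : ℝ) < F := by positivity
  refine le_of_mul_le_mul_right ?_ hF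
  calc (∏ j, (k.choose (m j) : ℝ)) * F ≤ (k : ℝ) ^ k := by exact_mod_cast hchoose
    _ ≤ Real.exp 1 ^ k * k.factorial := hexp
    _ ≤ Real.exp 1 ^ k * (Fintype.card β ^ k * F) := by gcongr; exact_mod_cast hfact
    _ = (Real.exp 1 * Fintype.card β) ^ k * F := by ring

namespace Matrix

section Fischer

variable {n : Type*} [Fintype n] [DecidableEq n]

open scoped MatrixOrder in
theorem one_le_det_of_one_le {Y : Matrix n n ℝ} (h : 1 ≤ Y) : 1 ≤ Y.det := by
  have hY : Y.IsHermitian := by simpa using (le_iff.mp h).isHermitian.add isHermitian_one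
  rw [hY.det_eq_prod_eigenvalues]
  exact Finset.one_le_prod fun i _ => by
    simpa using (CFC.one_le_iff Y hY.isSelfAdjoint).mp h _ (hY.eigenvalues_mem_spectrum_real i)

open scoped MatrixOrder in
theorem det_le_det_add_of_posSemidef {X S : Matrix n n ℝ} (hX : X.PosSemidef)
    (hS : S.PosSemidef) : X.det ≤ (X + S).det := by
  by_cases hX0 : X.det = 0
  · rw [hX0]; exact (hX.add hS).det_nonneg
  -- `det (X + Lᴴ L) = det X * det (1 + L X⁻¹ Lᴴ)` and `1 ≤ 1 + L X⁻¹ Lᴴ`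
  obtain ⟨L, rfl⟩ := CStarAlgebra.nonneg_iff_eq_star_mul_self.mp hS.nonneg
  rw [det_add_mul _ _ (isUnit_iff_ne_zero.mpr hX0)]
  refine le_mul_of_one_le_right hX.det_nonneg (one_le_det_of_one_le ?_)
  rw [le_iff, add_sub_cancel_left]
  simpa [star_eq_conjTranspose] using hX.inv.mul_mul_conjTranspose_same L

variable {m : Type*} [Fintype m] [DecidableEq m]

theorem det_fromBlocks_le_of_posSemidef {A : Matrix m m ℝ} (B : Matrix m n ℝ) (D : Matrix n n ℝ)
    (hG : (fromBlocks A B Bᴴ D).PosSemidef) :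
    (fromBlocks A B Bᴴ D).det ≤ A.det * D.det := by
  have hA : A.PosSemidef := hG.submatrix (Sum.inl : m → m ⊕ n)
  by_cases hA0 : A.det = 0
  · -- a kernel vector of `A`, padded with zeros, is a kernel vector of the whole matrix
    obtain ⟨v, hv0, hAv⟩ := exists_mulVec_eq_zero_iff.mpr hA0
    have hGv : fromBlocks A B Bᴴ D *ᵥ Sum.elim v 0 = 0 := by
      rw [← hG.dotProduct_mulVec_zero_iff]
      simp [fromBlocks_mulVec, hAv]
    have hv0' : Sum.elim v (0 : n → ℝ) ≠ 0 := fun h => hv0 (funext fun i => congrFun h (Sum.inl i))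
    rw [hA0, zero_mul, ← exists_mulVec_eq_zero_iff.mp ⟨_, hv0', hGv⟩]
  have hApd : A.PosDef := hA.posDef_iff_det_ne_zero.mpr hA0
  have : Invertible A := invertibleOfIsUnitDet _ (isUnit_iff_ne_zero.mpr hA0)
  have hSchur : (D - Bᴴ * A⁻¹ * B).PosSemidef := (hApd.fromBlocks₁₁ B D).mp hG
  rw [det_fromBlocks₁₁, invOf_eq_nonsing_inv]
  gcongr
  · exact hA.det_nonneg
  simpa using det_le_det_add_of_posSemidef hSchur (hA.inv.conjTranspose_mul_mul_same B)

end Fischer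

section PrincipalMinor

variable {κ : Type*} [DecidableEq κ]

def principalMinor {R : Type*} [CommRing R] (G : Matrix κ κ R) (s : Finset κ) : R :=
  (G.submatrix ((↑) : s → κ) (↑)).det

theorem principalMinor_univ [Fintype κ] {R : Type*} [CommRing R] (G : Matrix κ κ R) :
    principalMinor G univ = G.det :=
  det_submatrix_equiv_self (Equiv.subtypeUnivEquiv mem_univ) G

@[simp]
theorem principalMinor_empty {R : Type*} [CommRing R] (G : Matrix κ κ R) :
    principalMinor G ∅ = 1 :=
  det_isEmpty

theorem principalMinor_nonneg {G : Matrix κ κ ℝ} (hG : G.PosSemidef) (s : Finset κ) :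
    0 ≤ principalMinor G s :=
  (hG.submatrix _).det_nonneg

theorem principalMinor_union_le {G : Matrix κ κ ℝ} (hG : G.PosSemidef) {s t : Finset κ}
    (hst : Disjoint s t) :
    principalMinor G (s ∪ t) ≤ principalMinor G s * principalMinor G t := by
  have hblocks : (G.submatrix ((↑) : ↥(s ∪ t) → κ) (↑)).submatrix (Equiv.Finset.union s t hst)
      (Equiv.Finset.union s t hst) = fromBlocks (G.submatrix ((↑) : s → κ) (↑))
        (G.submatrix ((↑) : s → κ) ((↑) : t → κ)) (G.submatrix ((↑) : s → κ) ((↑) : t → κ))ᴴ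
        (G.submatrix ((↑) : t → κ) (↑)) := by
    ext (i | i) (j | j) <;> simp [← hG.isHermitian.apply i j]
  unfold principalMinor
  rw [← det_submatrix_equiv_self (Equiv.Finset.union s t hst), hblocks]
  refine det_fromBlocks_le_of_posSemidef _ _ ?_
  rw [← hblocks]
  exact (hG.submatrix _).submatrix _

theorem principalMinor_biUnion_le {G : Matrix κ κ ℝ} (hG : G.PosSemidef) {β : Type*}
    [DecidableEq β] (J : Finset β) {S : β → Finset κ} (hS : (J : Set β).PairwiseDisjoint S) :
    principalMinor G (J.biUnion S) ≤ ∏ j ∈ J, principalMinor G (S j) := by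
  induction J using Finset.induction_on with
  | empty => simp
  | insert a J ha ih =>
    have hdisj : Disjoint (S a) (J.biUnion S) := (disjoint_biUnion_right _ _ _).mpr fun j hj =>
      hS (mem_insert_self a J) (mem_insert_of_mem hj) (ne_of_mem_of_not_mem hj ha).symm
    rw [biUnion_insert, prod_insert ha]
    calc principalMinor G (S a ∪ J.biUnion S)
        ≤ principalMinor G (S a) * principalMinor G (J.biUnion S) :=
          principalMinor_union_le hG hdisj
      _ ≤ principalMinor G (S a) * ∏ j ∈ J, principalMinor G (S j) := by
          gcongr
          · exact principalMinor_nonneg hG _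
          · exact ih (hS.subset (by simp))

end PrincipalMinor

section CauchyBinet

variable {ι κ : Type*} [Fintype κ] [DecidableEq κ] {R : Type*} [CommRing R]

theorem sum_perm_prod_mul_det_submatrix_comp (N : Matrix κ ι R) (V : Matrix ι κ R) (φ : κ → ι) :
    ∑ σ : Equiv.Perm κ, (∏ a, N a (φ (σ a))) * (V.submatrix (φ ∘ σ) id).det =
      (N.submatrix id φ).det * (V.submatrix φ id).det := by
  have hperm (σ : Equiv.Perm κ) : (V.submatrix (φ ∘ σ) id).det =
      Equiv.Perm.sign σ * (V.submatrix φ id).det :=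
    det_permute σ (V.submatrix φ id)
  simp_rw [hperm, ← mul_assoc, ← sum_mul, ← det_transpose (N.submatrix id φ), det_apply']
  congr 1
  exact sum_congr rfl fun σ _ => mul_comm _ _

variable [Fintype ι]

theorem det_mul_eq_sum_prod_mul_det (N : Matrix κ ι R) (V : Matrix ι κ R) :
    (N * V).det = ∑ φ : κ → ι, (∏ a, N a (φ a)) * (V.submatrix φ id).det := by
  have hrows : N * V = fun a => ∑ i, N a i • V i := by
    ext a b
    simp [mul_apply, Finset.sum_apply]
  change (detRowAlternating : (κ → R) [⋀^κ]→ₗ[R] R).toMultilinearMap (N * V) = _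
  rw [hrows, MultilinearMap.map_sum]
  simp only [MultilinearMap.map_smul_univ]
  rfl

-- The Cauchy–Binet formula, summed over all maps `κ → ι` instead of subsets of `ι`: each subset
-- of size `card κ` occurs once for each of its `(card κ)!` orderings, and other maps contribute 0.
theorem factorial_card_smul_det_mul (N : Matrix κ ι R) (V : Matrix ι κ R) :
    (Fintype.card κ).factorial • (N * V).det =
      ∑ φ : κ → ι, (N.submatrix id φ).det * (V.submatrix φ id).det := by
  simp_rw [← sum_perm_prod_mul_det_submatrix_comp]
  rw [sum_comm]
  have hshift (σ : Equiv.Perm κ) : ∑ φ : κ → ι, (∏ a, N a (φ (σ a))) * (V.submatrix (φ ∘ σ) id).det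
      = (N * V).det := by
    rw [det_mul_eq_sum_prod_mul_det]
    exact Fintype.sum_equiv (Equiv.arrowCongr σ.symm (Equiv.refl ι)) _ _ fun φ => rfl
  simp [hshift, Fintype.card_perm]

theorem det_conjTranspose_mul_self_le_choose_mul_sq (V : Matrix ι κ ℝ) {c : ℝ}
    (hc : ∀ r : κ → ι, Function.Injective r → |(V.submatrix r id).det| ≤ c) :
    (Vᴴ * V).det ≤ (Fintype.card ι).choose (Fintype.card κ) * c ^ 2 := by
  classical
  have hterm (r : κ → ι) :
      (V.submatrix r id).det ^ 2 ≤ if Function.Injective r then c ^ 2 else 0 := by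
    split_ifs with hr
    · exact sq_le_sq' (abs_le.mp (hc r hr)).1 (abs_le.mp (hc r hr)).2
    · obtain ⟨a, b, hab, hne⟩ := Function.not_injective_iff.mp hr
      simp [det_zero_of_row_eq (M := V.submatrix r id) hne (congrArg V hab)]
  have hcount : (Finset.univ.filter fun r : κ → ι => Function.Injective r).card =
      (Fintype.card κ).factorial * (Fintype.card ι).choose (Fintype.card κ) := by
    rw [← Nat.descFactorial_eq_factorial_mul_choose, ← Fintype.card_embedding_eq,
      ← Fintype.card_subtype]
    exact Fintype.card_congr (Equiv.subtypeInjectiveEquivEmbedding κ ι)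
  have hfac : (0 : ℝ) < (Fintype.card κ).factorial := by positivity
  refine le_of_mul_le_mul_left ?_ hfac
  calc ((Fintype.card κ).factorial : ℝ) * (Vᴴ * V).det
      = ∑ r : κ → ι, (V.submatrix r id).det ^ 2 := by
        rw [← nsmul_eq_mul, factorial_card_smul_det_mul]
        refine sum_congr rfl fun r _ => ?_
        rw [sq, ← conjTranspose_submatrix, det_conjTranspose, star_trivial]
    _ ≤ ∑ r : κ → ι, if Function.Injective r then c ^ 2 else 0 := sum_le_sum fun r _ => hterm r
    _ = _ := by rw [sum_ite, sum_const_zero, add_zero, sum_const, hcount]; ring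

end CauchyBinet

end Matrix

section Detlb

variable {m n : Type*} [Fintype m] [Fintype n] (A : Matrix m n ℝ)

theorem detlb_nonneg : 0 ≤ detlb A :=
  Real.sSup_nonneg fun _ ⟨_, _, _, _, _, _, ht⟩ => ht ▸ Real.rpow_nonneg (abs_nonneg _) _

theorem rpow_inv_le_detlb {k : ℕ} (hk : 0 < k) {r : Fin k → m} {c : Fin k → n}
    (hr : Function.Injective r) (hc : Function.Injective c) :
    |(A.submatrix r c).det| ^ ((k : ℝ)⁻¹) ≤ detlb A := by
  refine le_csSup (Set.Finite.bddAbove ?_) ⟨k, hk, r, c, hr, hc, rfl⟩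
  refine (Set.finite_Iic (Fintype.card m)).biUnion (fun k _ => Set.finite_range
    fun rc : (Fin k → m) × (Fin k → n) => |(A.submatrix rc.1 rc.2).det| ^ ((k : ℝ)⁻¹))
    |>.subset ?_
  rintro t ⟨k, -, r, c, hr, -, rfl⟩
  exact Set.mem_biUnion (by simpa using Fintype.card_le_of_injective r hr) ⟨(r, c), rfl⟩

theorem abs_det_submatrix_le_detlb_pow {ι : Type*} [Fintype ι] [DecidableEq ι] (r : ι → m)
    {c : ι → n} (hc : Function.Injective c) :
    |(A.submatrix r c).det| ≤ detlb A ^ Fintype.card ι := by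
  by_cases hr : Function.Injective r
  swap
  · obtain ⟨a, b, hab, hne⟩ := Function.not_injective_iff.mp hr
    rw [det_zero_of_row_eq (M := A.submatrix r c) hne (congrArg (A · ∘ c) hab), abs_zero]
    exact pow_nonneg (detlb_nonneg A) _
  rcases isEmpty_or_nonempty ι with _ | _
  · simp
  set e := (Fintype.equivFin ι).symm
  have hk : 0 < Fintype.card ι := Fintype.card_pos
  calc |(A.submatrix r c).det|
      = (|(A.submatrix (r ∘ e) (c ∘ e)).det| ^ ((Fintype.card ι : ℝ)⁻¹)) ^ Fintype.card ι := by
        rw [Real.rpow_inv_natCast_pow (abs_nonneg _) hk.ne', ← submatrix_submatrix,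
          det_submatrix_equiv_self]
    _ ≤ detlb A ^ Fintype.card ι := by
        gcongr
        exact rpow_inv_le_detlb A hk (hr.comp e.injective) (hc.comp e.injective)

theorem detlb_le_of_forall {X : ℝ} (hX : 0 ≤ X)
    (h : ∀ k, 0 < k → ∀ (r : Fin k → m) (c : Fin k → n), Function.Injective r →
      Function.Injective c → |(A.submatrix r c).det| ≤ X ^ k) :
    detlb A ≤ X := by
  refine Real.sSup_le ?_ hX
  rintro t ⟨k, hk, r, c, hr, hc, rfl⟩
  calc |(A.submatrix r c).det| ^ ((k : ℝ)⁻¹) ≤ (X ^ k) ^ ((k : ℝ)⁻¹) := by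
        gcongr; exact h k hk r c hr hc
    _ = X := Real.pow_rpow_inv_natCast hX hk.ne'

end Detlb

section Kronecker

variable {m n p q ι : Type*} [Fintype p] [Fintype q] [Fintype ι] [DecidableEq ι]

theorem abs_det_kronecker_submatrix_le {P : Matrix m n ℝ} (hP : ∀ i j, |P i j| ≤ 1)
    (A : Matrix p q ℝ) (r : ι → m × p) {c : ι → n × q} (hc : Function.Injective c) {j : n}
    (hcj : ∀ y, (c y).1 = j) :
    |((P ⊗ₖ A).submatrix r c).det| ≤ detlb A ^ Fintype.card ι := by
  have hc₂ : Function.Injective (Prod.snd ∘ c) := fun y z h =>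
    hc (Prod.ext ((hcj y).trans (hcj z).symm) h)
  have hsplit : (P ⊗ₖ A).submatrix r c =
      of fun x y => P (r x).1 j * A.submatrix (Prod.snd ∘ r) (Prod.snd ∘ c) x y := by
    ext x y
    simp [kroneckerMap_apply, ← hcj y]
  rw [hsplit, det_mul_column, abs_mul, abs_prod]
  exact (mul_le_of_le_one_left (abs_nonneg _)
    (prod_le_one (fun _ _ => abs_nonneg _) fun _ _ => hP _ _)).trans
    (abs_det_submatrix_le_detlb_pow A _ hc₂)

theorem sq_det_kronecker_submatrix_le [Fintype n] [DecidableEq n] {P : Matrix m n ℝ}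
    (hP : ∀ i j, |P i j| ≤ 1) (A : Matrix p q ℝ) (r : ι → m × p) {c : ι → n × q}
    (hc : Function.Injective c) :
    ((P ⊗ₖ A).submatrix r c).det ^ 2 ≤
      (Real.exp 1 * Fintype.card n) ^ Fintype.card ι * (detlb A ^ Fintype.card ι) ^ 2 := by
  set B := (P ⊗ₖ A).submatrix r c
  set k := Fintype.card ι
  set S : n → Finset ι := fun j => {y | (c y).1 = j}
  have hG : (Bᴴ * B).PosSemidef := posSemidef_conjTranspose_mul_self B
  have hcover : univ.biUnion S = univ := biUnion_filter_eq_of_maps_to fun _ _ => mem_univ _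
  have hsum : ∑ j, #(S j) = k := (card_eq_sum_card_fiberwise fun _ _ => mem_univ _).symm
  have hblock (j : n) :
      principalMinor (Bᴴ * B) (S j) ≤ k.choose #(S j) * (detlb A ^ #(S j)) ^ 2 := by
    rw [principalMinor, submatrix_mul _ _ _ id _ Function.bijective_id, ← conjTranspose_submatrix]
    refine (det_conjTranspose_mul_self_le_choose_mul_sq _ (c := detlb A ^ #(S j))
      fun r' _ => ?_).trans_eq (by simp [k])
    simpa [B] using abs_det_kronecker_submatrix_le hP A (r ∘ r') (hc.comp Subtype.val_injective)
      (j := j) fun y => (mem_filter.mp y.2).2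
  calc B.det ^ 2 = principalMinor (Bᴴ * B) (univ.biUnion S) := by
        rw [hcover, principalMinor_univ, det_mul, det_conjTranspose, star_trivial, sq]
    _ ≤ ∏ j, principalMinor (Bᴴ * B) (S j) :=
        principalMinor_biUnion_le hG univ (Set.pairwiseDisjoint_filter _ _ _)
    _ ≤ ∏ j, k.choose #(S j) * (detlb A ^ #(S j)) ^ 2 :=
        prod_le_prod (fun j _ => principalMinor_nonneg hG _) fun j _ => hblock j
    _ = (∏ j, (k.choose #(S j) : ℝ)) * (detlb A ^ k) ^ 2 := by
        rw [prod_mul_distrib, prod_pow, prod_pow_eq_pow_sum, hsum]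
    _ ≤ (Real.exp 1 * Fintype.card n) ^ k * (detlb A ^ k) ^ 2 := by
        gcongr
        exact prod_choose_le_exp_mul_pow _ hsum

theorem detlb_kronecker_le [Fintype m] [Fintype n] {P : Matrix m n ℝ} (hP : ∀ i j, |P i j| ≤ 1)
    (A : Matrix p q ℝ) :
    detlb (P ⊗ₖ A) ≤ Real.sqrt (Real.exp 1 * Fintype.card n) * detlb A := by
  classical
  have := detlb_nonneg A
  refine detlb_le_of_forall _ (by positivity) fun k _ r c _ hc =>
    abs_le_of_sq_le_sq ?_ (by positivity)
  calc ((P ⊗ₖ A).submatrix r c).det ^ 2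
      ≤ (Real.exp 1 * Fintype.card n) ^ k * (detlb A ^ k) ^ 2 := by
        simpa using sq_det_kronecker_submatrix_le hP A r hc
    _ = (Real.sqrt (Real.exp 1 * Fintype.card n) ^ 2) ^ k * (detlb A ^ k) ^ 2 := by
        rw [Real.sq_sqrt (by positivity)]
    _ = ((Real.sqrt (Real.exp 1 * Fintype.card n) * detlb A) ^ k) ^ 2 := by ring

end Kronecker

theorem abs_powerMatrix_le_one (N : ℕ) (i : Fin (2 ^ N)) (j : Fin N) : |powerMatrix N i j| ≤ 1 := by
  rw [powerMatrix, of_apply]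
  split_ifs <;> simp

theorem stmt3_general (N : ℕ) {p q : ℕ} (A : Matrix (Fin p) (Fin q) ℝ) :
    detlb (powerMatrix N ⊗ₖ A) ≤ Real.sqrt (Real.exp 1 * N) * detlb A := by
  simpa using detlb_kronecker_le (abs_powerMatrix_le_one N) A

/-- For every positive integer `N` and every real matrix `A`,
`detlb (P_N ⊗ A) ≤ √(e·N) · detlb A`. -/
theorem stmt3 (N : ℕ) (hN : 0 < N) {p q : ℕ} (A : Matrix (Fin p) (Fin q) ℝ) :
    detlb (powerMatrix N ⊗ₖ A) ≤ Real.sqrt (Real.exp 1 * N) * detlb A :=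
  stmt3_general N A
end

section
/- For every positive integer N and every real p×q matrix A, disc(P_N ⊗ A) ≥ N · disc₁(A) / 2, where ⊗ denotes the Kronecker product. -/
/-!
Fix a coloring `x` of the columns of `P_N ⊗ A`, cut it into `N` blocks `x_j`, and put
`v_j = A x_j`. The row of `P_N ⊗ A` indexed by a subset `S ⊆ [N]` and a row `r` of `A` computes
`∑_{j ∈ S} v_j r`. Taking for `S` the indices with `v_j r ≥ 0` and then its complement shows
`∑_j |v_j r| ≤ 2 ‖(P_N ⊗ A) x‖_∞`. Summing over `r`, each block contributes
`‖v_j‖₁ ≥ p · disc₁ A`, so `N p · disc₁ A ≤ 2 p ‖(P_N ⊗ A) x‖_∞`.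
-/

open scoped Kronecker

/-- The discrepancy of a real matrix: the minimum over ±1 colorings `x` of `‖A x‖_∞`
(the sup norm on `m → ℝ`). -/
noncomputable def disc {m n : Type*} [Fintype m] [Fintype n] (A : Matrix m n ℝ) : ℝ :=
  sInf { t | ∃ x : n → ℝ, (∀ j, x j = 1 ∨ x j = -1) ∧ t = ‖A.mulVec x‖ }

/-- The (normalized) L¹ discrepancy of a real matrix. -/
noncomputable def disc1 {m n : Type*} [Fintype m] [Fintype n] (A : Matrix m n ℝ) : ℝ :=
  sInf { t | ∃ x : n → ℝ, (∀ j, x j = 1 ∨ x j = -1) ∧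
    t = (∑ i, |A.mulVec x i|) / (Fintype.card m : ℝ) }

section Discrepancy

variable {m n : Type*} [Fintype m] [Fintype n]

theorem disc1_le (A : Matrix m n ℝ) {x : n → ℝ} (hx : ∀ j, x j = 1 ∨ x j = -1) :
    disc1 A ≤ (∑ i, |A.mulVec x i|) / (Fintype.card m : ℝ) :=
  csInf_le ⟨0, by rintro _ ⟨y, -, rfl⟩; positivity⟩ ⟨x, hx, rfl⟩

theorem le_disc (A : Matrix m n ℝ) {c : ℝ}
    (h : ∀ x : n → ℝ, (∀ j, x j = 1 ∨ x j = -1) → c ≤ ‖A.mulVec x‖) : c ≤ disc A :=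
  le_csInf ⟨_, 1, fun _ => Or.inl rfl, rfl⟩ (by rintro _ ⟨x, hx, rfl⟩; exact h x hx)

end Discrepancy

theorem Matrix.kronecker_mulVec_apply {R l m n k : Type*} [CommSemiring R] [Fintype n]
    [Fintype k]
    (B : Matrix l n R) (A : Matrix m k R) (x : n × k → R) (i : l) (r : m) :
    (B ⊗ₖ A).mulVec x (i, r) = ∑ j, B i j * A.mulVec (fun c => x (j, c)) r := by
  simp [Matrix.mulVec, dotProduct, Fintype.sum_prod_type, Finset.mul_sum, mul_assoc]

theorem Finset.sum_abs_le_two_mul {ι : Type*} (s : Finset ι) (v : ι → ℝ) {E : ℝ}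
    (h : ∀ t ⊆ s, |∑ j ∈ t, v j| ≤ E) : ∑ j ∈ s, |v j| ≤ 2 * E := by
  have hpos := h _ (s.filter_subset fun j => 0 ≤ v j)
  have hneg := h _ (s.filter_subset fun j => ¬0 ≤ v j)
  have hsplit : ∑ j ∈ s, |v j|
      = ∑ j ∈ s.filter (fun j => 0 ≤ v j), v j - ∑ j ∈ s.filter (fun j => ¬0 ≤ v j), v j := by
    rw [← Finset.sum_filter_add_sum_filter_not s (fun j => 0 ≤ v j), sub_eq_add_neg,
      ← Finset.sum_neg_distrib]
    congr 1 <;> refine Finset.sum_congr rfl fun j hj => ?_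
    · exact abs_of_nonneg (Finset.mem_filter.1 hj).2
    · exact abs_of_neg (not_le.1 (Finset.mem_filter.1 hj).2)
  rw [hsplit]
  linarith [le_abs_self (∑ j ∈ s.filter (fun j => 0 ≤ v j), v j),
    neg_abs_le (∑ j ∈ s.filter (fun j => ¬0 ≤ v j), v j)]

theorem exists_powerMatrix_row_eq_indicator (N : ℕ) (S : Finset (Fin N)) :
    ∃ i : Fin (2 ^ N), ∀ j, powerMatrix N i j = if j ∈ S then 1 else 0 := by
  refine ⟨finFunctionFinEquiv (fun j => if j ∈ S then 1 else 0), fun j => ?_⟩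
  have h := finFunctionFinEquiv_symm_apply_val
    (finFunctionFinEquiv fun j => if j ∈ S then (1 : Fin 2) else 0) j
  rw [Equiv.symm_apply_apply] at h
  simp only [powerMatrix, Matrix.of_apply, Nat.testBit_eq_decide_div_mod_eq, ← h]
  by_cases hj : j ∈ S <;> simp [hj]

theorem abs_sum_le_norm_powerMatrix_kronecker_mulVec {N p q : ℕ}
    (A : Matrix (Fin p) (Fin q) ℝ) (x : Fin N × Fin q → ℝ) (S : Finset (Fin N)) (r : Fin p) :
    |∑ j ∈ S, A.mulVec (fun c => x (j, c)) r| ≤ ‖(powerMatrix N ⊗ₖ A).mulVec x‖ := by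
  obtain ⟨i, hi⟩ := exists_powerMatrix_row_eq_indicator N S
  have hrow :
      (powerMatrix N ⊗ₖ A).mulVec x (i, r) = ∑ j ∈ S, A.mulVec (fun c => x (j, c)) r := by
    simp [Matrix.kronecker_mulVec_apply, hi, Finset.sum_ite_mem]
  rw [← hrow, ← Real.norm_eq_abs]
  exact norm_le_pi_norm _ (i, r)

theorem stmt4_general (N : ℕ) {p q : ℕ} (A : Matrix (Fin p) (Fin q) ℝ) :
    (N : ℝ) * disc1 A / 2 ≤ disc (powerMatrix N ⊗ₖ A) := by
  refine le_disc _ fun x hx => ?_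
  set E := ‖(powerMatrix N ⊗ₖ A).mulVec x‖
  set v : Fin N → Fin p → ℝ := fun j => A.mulVec fun c => x (j, c)
  have hrow (r : Fin p) : ∑ j, |v j r| ≤ 2 * E :=
    Finset.sum_abs_le_two_mul _ _ fun S _ => abs_sum_le_norm_powerMatrix_kronecker_mulVec A x S r
  have hblock (j : Fin N) : disc1 A ≤ (∑ r, |v j r|) / p := by
    simpa using disc1_le A fun c => hx (j, c)
  have hbound : N * disc1 A ≤ 2 * E := calc
    N * disc1 A = ∑ _j : Fin N, disc1 A := by simp
    _ ≤ ∑ j, (∑ r, |v j r|) / p := Finset.sum_le_sum fun j _ => hblock j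
    _ = (∑ r, ∑ j, |v j r|) / p := by rw [← Finset.sum_div, Finset.sum_comm]
    _ ≤ (∑ _r : Fin p, 2 * E) / p := by gcongr with r; exact hrow r
    _ ≤ 2 * E := div_le_of_le_mul₀ (by positivity) (by positivity) (by simp [mul_comm])
  linarith

/-- Discrepancy amplification: for every positive integer `N` and every real `p × q`
matrix `A`, `disc (P_N ⊗ A) ≥ N · disc₁ A / 2`. -/
theorem stmt4 (N : ℕ) (hN : 0 < N) {p q : ℕ} (A : Matrix (Fin p) (Fin q) ℝ) :
    (N : ℝ) * disc1 A / 2 ≤ disc (powerMatrix N ⊗ₖ A) :=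
  stmt4_general N A
end

section
/- For every integer k ≥ 0, detlb(A_k) ≤ 2, where A_k is the 2^k × 2^k discrete Haar basis matrix. More precisely, every i×i square submatrix B of A_k satisfies |det(B)| ≤ 2^i. -/
open scoped Kronecker

/-!
Induct on `k` and, inside, on the size of the minor. A minor of `A_{k+1}` that uses one of the
columns of `[I; -I]` can be expanded along that column, which has at most two nonzero entries,
both `±1`: this costs a factor `2`. A minor using only columns of `[A_k; A_k]` becomes a minor of
`A_k` once the two row blocks are identified, or vanishes if two of its rows get identified.
Hence every `i × i` minor is at most `2 ^ i`, and `detlb (A_k) ≤ 2` follows.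
-/

open Function

theorem Fintype.sum_comp_le_sum_of_injective {ι κ R : Type*} [Fintype ι] [Fintype κ]
    [AddCommMonoid R] [PartialOrder R] [IsOrderedAddMonoid R] {f : κ → R} (hf : ∀ y, 0 ≤ f y)
    {r : ι → κ} (hr : Injective r) :
    ∑ x, f (r x) ≤ ∑ y, f y :=
  (Finset.sum_map _ ⟨r, hr⟩ f).symm.trans_le (Finset.sum_le_univ_sum_of_nonneg hf)

namespace Matrix

theorem abs_det_le_sum_abs_mul_of_abs_det_submatrix_le {R : Type*} [CommRing R] [LinearOrder R]
    [IsStrictOrderedRing R] {n : ℕ} (B : Matrix (Fin (n + 1)) (Fin (n + 1)) R) (j : Fin (n + 1))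
    {M : R} (hM : ∀ x : Fin (n + 1), |(B.submatrix x.succAbove j.succAbove).det| ≤ M) :
    |B.det| ≤ (∑ x, |B x j|) * M := by
  rw [det_succ_column B j, Finset.sum_mul]
  refine (Finset.abs_sum_le_sum_abs _ _).trans (Finset.sum_le_sum fun x _ => ?_)
  rw [abs_mul, abs_mul, abs_pow, abs_neg, abs_one, one_pow, one_mul]
  exact mul_le_mul_of_nonneg_left (hM x) (abs_nonneg _)

def MinorsBoundedByPow {m n : Type*} (A : Matrix m n ℝ) (b : ℝ) : Prop :=
  ∀ (i : ℕ) (r : Fin i → m) (c : Fin i → n), Injective r → Injective c →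
    |(A.submatrix r c).det| ≤ b ^ i

namespace MinorsBoundedByPow

variable {m n n' : Type*} {A : Matrix m n ℝ} {b : ℝ}

theorem of_subsingleton [Subsingleton m] (hA : ∀ x y, |A x y| ≤ b) :
    MinorsBoundedByPow A b := by
  rintro (_ | _ | i) r c hr _
  · simp
  · simpa using hA (r 0) (c 0)
  · exact absurd (hr (Subsingleton.elim (r 0) (r 1))) (by simp)

theorem submatrix {m' n' : Type*} (hA : MinorsBoundedByPow A b) {f : m' → m} {g : n' → n}
    (hf : Injective f) (hg : Injective g) : MinorsBoundedByPow (A.submatrix f g) b :=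
  fun i r c hr hc => by
    simpa only [submatrix_submatrix] using hA i (f ∘ r) (g ∘ c) (hf.comp hr) (hg.comp hc)

theorem abs_det_submatrix_le (hA : MinorsBoundedByPow A b) (hb : 0 ≤ b) {i : ℕ}
    (r : Fin i → m) (c : Fin i → n) : |(A.submatrix r c).det| ≤ b ^ i := by
  by_cases hr : Injective r
  · by_cases hc : Injective c
    · exact hA i r c hr hc
    · obtain ⟨y, y', hcy, hyy'⟩ := not_injective_iff.mp hc
      rw [det_zero_of_column_eq hyy' fun x => by simp [hcy], abs_zero]
      positivity
  · obtain ⟨x, x', hrx, hxx'⟩ := not_injective_iff.mp hr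
    rw [det_zero_of_row_eq hxx' (by ext; simp [hrx]), abs_zero]
    positivity

theorem fromBlocks_self [Fintype m] (hA : MinorsBoundedByPow A b) (hb : 0 ≤ b)
    (B D : Matrix m n' ℝ) (hBD : ∀ p, ∑ q, |B q p| + ∑ q, |D q p| ≤ b) :
    MinorsBoundedByPow (fromBlocks A B A D) b := by
  intro i
  induction i with
  | zero => simp
  | succ i ih =>
    intro r c hr hc
    by_cases hright : ∃ j p, c j = Sum.inr p
    · -- Expanding along a right-hand column: its entries have absolute sum at most `b`.
      obtain ⟨j, p, hj⟩ := hright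
      have hcol : ∑ x, |fromBlocks A B A D (r x) (c j)| ≤ b := by
        refine (Fintype.sum_comp_le_sum_of_injective
          (f := fun y => |fromBlocks A B A D y (c j)|) (fun _ => abs_nonneg _) hr).trans ?_
        simpa [hj] using hBD p
      calc |((fromBlocks A B A D).submatrix r c).det|
          ≤ (∑ x, |fromBlocks A B A D (r x) (c j)|) * b ^ i :=
            abs_det_le_sum_abs_mul_of_abs_det_submatrix_le _ j fun x =>
              ih _ _ (hr.comp Fin.succAbove_right_injective)
                (hc.comp Fin.succAbove_right_injective)
        _ ≤ b * b ^ i := mul_le_mul_of_nonneg_right hcol (by positivity)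
        _ = b ^ (i + 1) := (pow_succ' b i).symm
    · -- Using only left-hand columns, the minor is one of `A` with the two row blocks merged.
      have hleft : ∀ j, ∃ q, c j = Sum.inl q := fun j => by
        rcases h : c j with q | q
        · exact ⟨q, rfl⟩
        · exact absurd ⟨j, q, h⟩ hright
      choose c' hc' using hleft
      have hminor :
          (fromBlocks A B A D).submatrix r c = A.submatrix (Sum.elim id id ∘ r) c' := by
        ext x y
        rcases h : r x with q | q <;> simp [h, hc']
      rw [hminor]
      exact hA.abs_det_submatrix_le hb _ _

theorem detlb_le {N : Type*} [Fintype N] {A : Matrix N N ℝ} (hA : MinorsBoundedByPow A b)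
    (hb : 0 ≤ b) : detlb A ≤ b := by
  refine Real.sSup_le ?_ hb
  rintro t ⟨i, hi, r, c, hr, hc, rfl⟩
  calc |(A.submatrix r c).det| ^ (i : ℝ)⁻¹ ≤ (b ^ i) ^ (i : ℝ)⁻¹ :=
        Real.rpow_le_rpow (abs_nonneg _) (hA i r c hr hc) (by positivity)
    _ = b := Real.pow_rpow_inv_natCast hb hi.ne'

end MinorsBoundedByPow

end Matrix

open Matrix

theorem minorsBoundedByPow_haar (k : ℕ) : MinorsBoundedByPow (haar k) 2 := by
  induction k with
  | zero =>
    have : Subsingleton (Fin (2 ^ 0)) := inferInstanceAs (Subsingleton (Fin 1))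
    exact MinorsBoundedByPow.of_subsingleton fun _ _ => by norm_num [haar]
  | succ k ih =>
    have hcol : ∀ p, ∑ q, |(1 : Matrix (Fin (2 ^ k)) (Fin (2 ^ k)) ℝ) q p|
        + ∑ q, |(-1 : Matrix (Fin (2 ^ k)) (Fin (2 ^ k)) ℝ) q p| ≤ 2 := fun p => by
      norm_num [one_apply, apply_ite]
    rw [haar, reindex_apply]
    exact (MinorsBoundedByPow.fromBlocks_self ih zero_le_two _ _ hcol).submatrix
      (Equiv.injective _) (Equiv.injective _)

/-- For every `k ≥ 0`, `detlb (A_k) ≤ 2`; more precisely, every `i × i` square submatrix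
`B` of the Haar matrix `A_k` satisfies `|det B| ≤ 2 ^ i`. -/
theorem stmt7 (k : ℕ) :
    detlb (haar k) ≤ 2 ∧
    ∀ (i : ℕ) (r c : Fin i → Fin (2 ^ k)), Function.Injective r → Function.Injective c →
      |((haar k).submatrix r c).det| ≤ 2 ^ i :=
  ⟨(minorsBoundedByPow_haar k).detlb_le zero_le_two, minorsBoundedByPow_haar k⟩
end

section
/- Let Ã_k be the 2^k × (2^k − 1) matrix obtained from the discrete Haar basis matrix A_k by deleting its first (all-ones) column. For every x ∈ {-1,+1}^{2^k − 1}, the vector Ã_k x is a permutation of the vector Ã_k 𝟙, where 𝟙 is the all-ones vector; that is, there is a bijection σ of the row indices such that (Ã_k x)_i = (Ã_k 𝟙)_{σ(i)} for all i. -/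
/-!
Write `Ã_k x = A_k x̂`, where `x̂` extends `x` by `0` at the first index, and split
`x̂ = (y, z)` along the blocks of `A_{k+1}`, so that `A_{k+1} x̂ = (A_k y + z, A_k y - z)`.
As every `z_i` is `±1`, exchanging the `i`-th entries of the two halves wherever `z_i = -1`
turns this into `(A_k y + 𝟙, A_k y - 𝟙)`; by induction `A_k y` is a permutation of `A_k 𝟙̂`,
and permuting both halves by the same permutation gives `A_{k+1} 𝟙̂`.
-/

open scoped Kronecker

/-- `Ã_k`: the Haar matrix with its first (all-ones) column removed, a `2^k × (2^k - 1)`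
matrix whose columns are indexed by the nonzero indices. -/
noncomputable def haarTilde (k : ℕ) :
    Matrix (Fin (2 ^ k)) {j : Fin (2 ^ k) // j ≠ 0} ℝ :=
  (haar k).submatrix id (fun j : {j : Fin (2 ^ k) // j ≠ 0} => (j : Fin (2 ^ k)))

open Matrix

section Rearrangement

variable {ι κ μ α β : Type*}

def IsRearrangement (v : ι → α) (w : κ → α) : Prop :=
  ∃ e : ι ≃ κ, v = w ∘ e

namespace IsRearrangement

theorem comp_equiv (w : κ → α) (e : ι ≃ κ) : IsRearrangement (w ∘ e) w :=
  ⟨e, rfl⟩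

theorem symm {v : ι → α} {w : κ → α} (h : IsRearrangement v w) : IsRearrangement w v := by
  obtain ⟨e, rfl⟩ := h
  exact ⟨e.symm, by ext; simp⟩

theorem trans {v : ι → α} {w : κ → α} {u : μ → α} (h₁ : IsRearrangement v w)
    (h₂ : IsRearrangement w u) : IsRearrangement v u := by
  obtain ⟨e₁, rfl⟩ := h₁
  obtain ⟨e₂, rfl⟩ := h₂
  exact ⟨e₁.trans e₂, rfl⟩

theorem comp {v : ι → α} {w : κ → α} (h : IsRearrangement v w) (f : α → β) :
    IsRearrangement (f ∘ v) (f ∘ w) := by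
  obtain ⟨e, rfl⟩ := h
  exact ⟨e, rfl⟩

theorem sumElim {v : ι → α} {w : κ → α} {v' : ι → α} {w' : κ → α}
    (h : IsRearrangement v w) (h' : IsRearrangement v' w') :
    IsRearrangement (Sum.elim v v') (Sum.elim w w') := by
  obtain ⟨e, rfl⟩ := h
  obtain ⟨e', rfl⟩ := h'
  exact ⟨Equiv.sumCongr e e', by ext (_ | _) <;> rfl⟩

end IsRearrangement

theorem isRearrangement_sumElim_add_sub [AddGroup α] (u z : ι → α) (a : α)
    (hz : ∀ i, z i = a ∨ z i = -a) :
    IsRearrangement (Sum.elim (u + z) (u - z))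
      (Sum.elim (fun i => u i + a) (fun i => u i - a)) := by
  classical
  let swapNeg : ι ⊕ ι → ι ⊕ ι :=
    Sum.elim (fun i => if z i = a then .inl i else .inr i)
      (fun i => if z i = a then .inr i else .inl i)
  have hswap : Function.Involutive swapNeg := by
    rintro (i | i) <;> by_cases h : z i = a <;> simp [swapNeg, h]
  refine ⟨hswap.toPerm, ?_⟩
  ext (i | i) <;> by_cases h : z i = a <;> simp only [swapNeg, h, Function.Involutive.coe_toPerm,
    Function.comp_apply, Sum.elim_inl, Sum.elim_inr, if_true, if_false, Pi.add_apply, Pi.sub_apply]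
  all_goals simp [(hz i).resolve_left h, sub_eq_add_neg]

end Rearrangement

theorem Matrix.submatrix_subtype_ne_mulVec {m n R : Type*} [Fintype n] [DecidableEq n]
    [NonUnitalNonAssocSemiring R] (M : Matrix m n R) (a : n) (x : {j // j ≠ a} → R) :
    M.submatrix id Subtype.val *ᵥ x = M *ᵥ fun j => if h : j = a then 0 else x ⟨j, h⟩ := by
  ext i
  simp only [mulVec, dotProduct, submatrix_apply, id]
  rw [Fintype.sum_eq_add_sum_subtype_ne _ a, dif_pos rfl, mul_zero, zero_add]
  exact Finset.sum_congr rfl fun j _ => by rw [dif_neg j.2]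

def haarSplit (k : ℕ) : Fin (2 ^ k) ⊕ Fin (2 ^ k) ≃ Fin (2 ^ (k + 1)) :=
  finSumFinEquiv.trans (finCongr (by rw [pow_succ, mul_two]))

theorem haarSplit_inl_val {k : ℕ} (i : Fin (2 ^ k)) : (haarSplit k (.inl i) : ℕ) = i := rfl

theorem haarSplit_inr_val {k : ℕ} (i : Fin (2 ^ k)) :
    (haarSplit k (.inr i) : ℕ) = 2 ^ k + i := rfl

theorem haarSplit_inl_eq_zero_iff {k : ℕ} {i : Fin (2 ^ k)} :
    haarSplit k (.inl i) = 0 ↔ i = 0 := by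
  rw [Fin.ext_iff, Fin.ext_iff, haarSplit_inl_val, Fin.val_zero, Fin.val_zero]

theorem haarSplit_inr_ne_zero {k : ℕ} (i : Fin (2 ^ k)) : haarSplit k (.inr i) ≠ 0 := by
  rw [Ne, Fin.ext_iff, haarSplit_inr_val, Fin.val_zero]
  positivity

theorem haar_succ_mulVec_comp_haarSplit (k : ℕ) (w : Fin (2 ^ (k + 1)) → ℝ) :
    (haar (k + 1) *ᵥ w) ∘ haarSplit k =
      Sum.elim (haar k *ᵥ (w ∘ haarSplit k ∘ .inl) + w ∘ haarSplit k ∘ .inr)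
        (haar k *ᵥ (w ∘ haarSplit k ∘ .inl) - w ∘ haarSplit k ∘ .inr) := by
  have hblocks : haar (k + 1) = reindex (haarSplit k) (haarSplit k)
      (fromBlocks (haar k) 1 (haar k) (-1)) := rfl
  rw [hblocks, reindex_apply, submatrix_mulVec_equiv, Equiv.symm_symm, Function.comp_assoc,
    Equiv.symm_comp_self, Function.comp_id, fromBlocks_mulVec, one_mulVec, neg_mulVec, one_mulVec,
    sub_eq_add_neg, Function.comp_assoc, Function.comp_assoc]

theorem haar_mulVec_isRearrangement (k : ℕ) (v : Fin (2 ^ k) → ℝ) (hv₀ : v 0 = 0)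
    (hv : ∀ j ≠ 0, v j = 1 ∨ v j = -1) :
    IsRearrangement (haar k *ᵥ v) (haar k *ᵥ Function.update (1 : Fin (2 ^ k) → ℝ) 0 0) := by
  induction k with
  | zero =>
    have : Subsingleton (Fin (2 ^ 0)) := inferInstanceAs (Subsingleton (Fin 1))
    have hv_eq : v = Function.update (1 : Fin (2 ^ 0) → ℝ) 0 0 := by
      ext j
      rw [Subsingleton.elim j 0, hv₀, Function.update_self]
    rw [hv_eq]
    exact ⟨Equiv.refl _, rfl⟩
  | succ k ih =>
    set e := haarSplit k
    have hy : ∀ j ≠ 0, (v ∘ e ∘ .inl) j = 1 ∨ (v ∘ e ∘ .inl) j = -1 := fun j hj =>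
      hv _ (haarSplit_inl_eq_zero_iff.not.mpr hj)
    have hz : ∀ j, (v ∘ e ∘ .inr) j = 1 ∨ (v ∘ e ∘ .inr) j = -1 := fun j =>
      hv _ (haarSplit_inr_ne_zero j)
    have hones_inl : Function.update (1 : Fin (2 ^ (k + 1)) → ℝ) 0 0 ∘ e ∘ .inl =
        Function.update (1 : Fin (2 ^ k) → ℝ) 0 0 := by
      ext j
      by_cases hj : j = 0 <;> simp [Function.update_apply, hj, e, haarSplit_inl_eq_zero_iff]
    have hones_inr : Function.update (1 : Fin (2 ^ (k + 1)) → ℝ) 0 0 ∘ e ∘ .inr = 1 := by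
      ext j
      simp [e, haarSplit_inr_ne_zero]
    have he₀ : e (.inl 0) = 0 := haarSplit_inl_eq_zero_iff.mpr rfl
    have hrec := ih (v ∘ e ∘ .inl) (by simp only [Function.comp_apply, he₀, hv₀]) hy
    refine ((IsRearrangement.comp_equiv _ e).symm.trans ?_).trans (IsRearrangement.comp_equiv _ e)
    rw [haar_succ_mulVec_comp_haarSplit, haar_succ_mulVec_comp_haarSplit, hones_inl, hones_inr]
    exact (isRearrangement_sumElim_add_sub _ _ 1 hz).trans
      ((hrec.comp (· + 1)).sumElim (hrec.comp (· - 1)))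

theorem haarTilde_mulVec (k : ℕ) (x : {j : Fin (2 ^ k) // j ≠ 0} → ℝ) :
    haarTilde k *ᵥ x = haar k *ᵥ fun j => if h : j = 0 then 0 else x ⟨j, h⟩ :=
  submatrix_subtype_ne_mulVec _ _ _

/-- For every `±1` vector `x`, the vector `Ã_k x` is a permutation of the vector `Ã_k 𝟙`. -/
theorem stmt10 (k : ℕ) (x : {j : Fin (2 ^ k) // j ≠ 0} → ℝ)
    (hx : ∀ j, x j = 1 ∨ x j = -1) :
    ∃ σ : Equiv.Perm (Fin (2 ^ k)),
      ∀ i, (haarTilde k).mulVec x i = (haarTilde k).mulVec (fun _ => 1) (σ i) := by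
  have hones : (fun j : Fin (2 ^ k) => if j = 0 then (0 : ℝ) else 1) =
      Function.update (1 : Fin (2 ^ k) → ℝ) 0 0 := by
    ext j
    by_cases hj : j = 0 <;> simp [hj]
  obtain ⟨σ, hσ⟩ :=
    haar_mulVec_isRearrangement k (fun j => if h : j = 0 then 0 else x ⟨j, h⟩) (by simp)
      fun j hj => by simpa [hj] using hx ⟨j, hj⟩
  refine ⟨σ, fun i => ?_⟩
  rw [haarTilde_mulVec, haarTilde_mulVec, hσ]
  simp [hones]
end
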